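/- Let A be an n-dimensional naturally graded p-filiform non-unital associative algebra over ℂ (p ≥ 1, n − p ≥ 4) with natural grading (𝒜_i), write s_i = dim 𝒜_i − 1, and let {e_1, …, e_{n−p}, f_1, …, f_p} be a homogeneous adapted basis as produced by Lemma 3.3 (so that f_{s_1+⋯+s_k+i}·e_j = f_{s_1+⋯+s_{k+j}+i} for 1 ≤ i ≤ s_{k+j+1}, and = 0 for s_{k+j+1}+1 ≤ i ≤ s_{k+j}). Then f_{s_1+⋯+s_k+i}·f_{s_1+⋯+s_t+j} = 0 for all k, t with 1 ≤ k ≤ n − p − 4, 1 ≤ t ≤ n − p − 3 − k, and all i, j with s_{k+2} + 1 ≤ i ≤ s_{k+1} and s_{t+2} + 1 ≤ j ≤ s_{t+1}. -/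

import Mathlib

/-!
Write `F = f_{s_1+⋯+s_k+i}` and `G = f_{s_1+⋯+s_t+j}`. Since `i > s_{k+2}`, `F e_1 = 0`, hence
`F e_m = F (e_1 e_{m-1}) = 0` for all `m`, and `y = e_1 + F ∉ A²` moves the chain
`e_1 ↦ e_2 ↦ ⋯ ↦ e_{n-p}` exactly as `e_1` does. The rank condition of a `p`-filiform algebra
then forces `range L_y = span (e_2, …, e_{n-p})`, and this range contains `F G = y G`
(as `e_1 G = 0`). Because `e_1 (F G) = (e_1 F) G = 0` and `L_{e_1}` shifts `e_2, …, e_{n-p}`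
down to `0`, `F G` is a multiple of `e_{n-p}`; being homogeneous of degree `k + t + 2 < n - p`,
it vanishes.
-/

variable (A : Type*) [NonUnitalRing A] [Module ℂ A] [SMulCommClass ℂ A A] [IsScalarTower ℂ A A]

/-- Product of two submodules of a non-unital algebra: the span of all pairwise
products. In particular `pmul A ⊤ ⊤` is `A²`, the span of all products `x·y`. -/
def pmul (I J : Submodule ℂ A) : Submodule ℂ A :=
  Submodule.span ℂ (Set.image2 (· * ·) (I : Set A) (J : Set A))

/-- The series of powers `A^1 = A`, `A^{i+1} = Σ_{k=1}^{i} A^k · A^{i+1-k}`.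
(`algPow A 0` is junk, set to `⊤`.) -/
def algPow : ℕ → Submodule ℂ A
  | 0 => ⊤
  | 1 => ⊤
  | n + 2 => ⨆ k : Fin (n + 1), pmul A (algPow (k + 1)) (algPow (n + 1 - k))
  termination_by n => n
  decreasing_by
  · omega
  · omega

/-- An algebra is nilpotent if some power `A^m` (`m ≥ 1`) vanishes. -/
def IsNilpotentAlg : Prop :=
  ∃ m : ℕ, 1 ≤ m ∧ algPow A m = ⊥

/-- A natural grading of `A`: a family of submodules `𝒜 1, 𝒜 2, …` (with `𝒜 0 = ⊥`)
such that `A` is their internal direct sum, `𝒜 i · 𝒜 j ⊆ 𝒜 (i+j)` and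
`𝒜 (i+1) = 𝒜 1 · 𝒜 i`. -/
structure IsNaturalGrading (𝒜 : ℕ → Submodule ℂ A) : Prop where
  zero : 𝒜 0 = ⊥
  internal : DirectSum.IsInternal 𝒜
  mul_le : ∀ i j, 1 ≤ i → 1 ≤ j → pmul A (𝒜 i) (𝒜 j) ≤ 𝒜 (i + j)
  succ : ∀ i, 1 ≤ i → 𝒜 (i + 1) = pmul A (𝒜 1) (𝒜 i)

/-- `x ∈ A ∖ A²` realizes the characteristic sequence `(n-p, 1, …, 1)`:
the left multiplication `L_x` satisfies `L_x^{n-p-1} ≠ 0` and `rank L_x = n-p-1`. -/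
def RealizesCharSeq (n p : ℕ) (x : A) : Prop :=
  x ∉ pmul A ⊤ ⊤ ∧ (LinearMap.mulLeft ℂ x) ^ (n - p - 1) ≠ 0 ∧
    Module.finrank ℂ (LinearMap.range (LinearMap.mulLeft ℂ x)) = n - p - 1

/-- `A` is `p`-filiform: `C(A) = (n-p, 1, …, 1)`, i.e. some `x ∈ A ∖ A²` realizes the
characteristic sequence, and for every `y ∈ A ∖ A²` one has `L_y^{n-p} = 0` and, if
`L_y^{n-p-1} ≠ 0`, then `rank L_y = n-p-1`. -/
def IsPFiliform (n p : ℕ) : Prop :=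
  (∃ x : A, RealizesCharSeq A n p x) ∧
    ∀ y : A, y ∉ pmul A ⊤ ⊤ →
      (LinearMap.mulLeft ℂ y) ^ (n - p) = 0 ∧
        ((LinearMap.mulLeft ℂ y) ^ (n - p - 1) ≠ 0 →
          Module.finrank ℂ (LinearMap.range (LinearMap.mulLeft ℂ y)) = n - p - 1)

/-- An adapted basis `{e_1,…,e_{n-p}, f_1,…,f_p}` of a `p`-filiform algebra:
a basis with `e_1` realizing the characteristic sequence, `e_1 e_i = e_{i+1}` for
`1 ≤ i ≤ n-p-1`, `e_1 e_{n-p} = 0`, and `e_1 f_j = 0` for `1 ≤ j ≤ p`. -/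
structure IsAdaptedBasis (n p : ℕ) (e f : ℕ → A) : Prop where
  indep : LinearIndependent ℂ
    (Sum.elim (fun i : Fin (n - p) => e (i.1 + 1)) (fun j : Fin p => f (j.1 + 1)))
  span : Submodule.span ℂ (Set.range
    (Sum.elim (fun i : Fin (n - p) => e (i.1 + 1)) (fun j : Fin p => f (j.1 + 1)))) = ⊤
  char : RealizesCharSeq A n p (e 1)
  mul_e : ∀ i, 1 ≤ i → i ≤ n - p - 1 → e 1 * e i = e (i + 1)
  mul_last : e 1 * e (n - p) = 0
  mul_f : ∀ j, 1 ≤ j → j ≤ p → e 1 * f j = 0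

/-- `s_i = dim 𝒜_i − 1` (truncated subtraction). -/
noncomputable def sdim (𝒜 : ℕ → Submodule ℂ A) (i : ℕ) : ℕ :=
  Module.finrank ℂ (𝒜 i) - 1

/-- `S k = s_1 + ⋯ + s_k` (with `S 0 = 0`). -/
noncomputable def sSum (𝒜 : ℕ → Submodule ℂ A) (k : ℕ) : ℕ :=
  ∑ j ∈ Finset.Icc 1 k, sdim A 𝒜 j

/-- A homogeneous adapted basis: an adapted basis with `e_i ∈ 𝒜_i` for
`1 ≤ i ≤ n-p` and `f_{s_1+⋯+s_{i-1}+1}, …, f_{s_1+⋯+s_i} ∈ 𝒜_i` for `1 ≤ i ≤ n-p`. -/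
structure IsHomogAdaptedBasis (n p : ℕ) (𝒜 : ℕ → Submodule ℂ A) (e f : ℕ → A) : Prop where
  adapted : IsAdaptedBasis A n p e f
  e_mem : ∀ i, 1 ≤ i → i ≤ n - p → e i ∈ 𝒜 i
  f_mem : ∀ i, 1 ≤ i → i ≤ n - p →
    ∀ t, sSum A 𝒜 (i - 1) < t → t ≤ sSum A 𝒜 i → f t ∈ 𝒜 i

open Submodule

theorem iSupIndep.sum_finrank_le {K M ι : Type*} [DivisionRing K] [AddCommGroup M] [Module K M]
    [FiniteDimensional K M] [DecidableEq ι] {V : ι → Submodule K M} (hV : iSupIndep V)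
    (s : Finset ι) : ∑ i ∈ s, Module.finrank K (V i) ≤ Module.finrank K M := by
  suffices h : ∑ i ∈ s, Module.finrank K (V i) = Module.finrank K ↥(s.sup V) from
    h ▸ finrank_le _
  induction s using Finset.induction with
  | empty => rw [Finset.sum_empty, Finset.sup_empty, finrank_bot]
  | insert a s ha ih =>
    have hdisj : Disjoint (V a) (s.sup V) :=
      (hV a).mono_right <| Finset.sup_le fun b hb =>
        le_iSup₂ (f := fun b (_ : b ≠ a) => V b) b fun hba => ha (hba ▸ hb)
    have := finrank_sup_add_finrank_inf_eq (V a) (s.sup V)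
    rw [hdisj.eq_bot, finrank_bot] at this
    rw [Finset.sup_insert, Finset.sum_insert ha, ih]
    omega

theorem mem_span_last_of_shift_apply_eq_zero {K M : Type*} [Field K] [AddCommGroup M]
    [Module K M] {m : ℕ} {v : Fin (m + 1) → M} (hv : LinearIndependent K v) (T : M →ₗ[K] M)
    (hT : ∀ r : Fin m, T (v r.castSucc) = v r.succ) (hlast : T (v (Fin.last m)) = 0)
    {x : M} (hx : x ∈ span K (Set.range v)) (hTx : T x = 0) : x ∈ K ∙ v (Fin.last m) := by
  obtain ⟨c, rfl⟩ := (mem_span_range_iff_exists_fun K).1 hx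
  have hc : ∀ r : Fin m, c r.castSucc = 0 := by
    refine Fintype.linearIndependent_iff.1 (hv.comp _ (Fin.succ_injective m)) _ ?_
    simpa [Fin.sum_univ_castSucc, hT, hlast] using hTx
  simp [Fin.sum_univ_castSucc, hc, mem_span_singleton]

theorem pow_mulLeft_apply_of_mul_eq {K R : Type*} [CommSemiring K] [NonUnitalNonAssocSemiring R]
    [Module K R] [SMulCommClass K R R] {y : R} {e : ℕ → R} {N : ℕ}
    (h : ∀ m, 1 ≤ m → m ≤ N → y * e m = e (m + 1)) :
    ∀ m ≤ N, (LinearMap.mulLeft K y ^ m) (e 1) = e (m + 1)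
  | 0, _ => rfl
  | m + 1, hm => by
    rw [pow_succ', Module.End.mul_apply, pow_mulLeft_apply_of_mul_eq h m (by omega),
      LinearMap.mulLeft_apply, h (m + 1) (by omega) hm]

variable {A}

section

omit [IsScalarTower ℂ A A]

section

omit [SMulCommClass ℂ A A]

theorem mem_pmul {I J : Submodule ℂ A} {x y : A} (hx : x ∈ I) (hy : y ∈ J) :
    x * y ∈ pmul A I J :=
  subset_span (Set.mem_image2_of_mem hx hy)

theorem sSum_succ (𝒜 : ℕ → Submodule ℂ A) (k : ℕ) :
    sSum A 𝒜 (k + 1) = sSum A 𝒜 k + sdim A 𝒜 (k + 1) :=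
  Finset.sum_Icc_succ_top (by omega) _

theorem sSum_mono (𝒜 : ℕ → Submodule ℂ A) : Monotone (sSum A 𝒜) := fun _ _ h =>
  Finset.sum_le_sum_of_subset (Finset.Icc_subset_Icc_right h)

namespace IsNaturalGrading

variable {𝒜 : ℕ → Submodule ℂ A} (hgr : IsNaturalGrading A 𝒜)
include hgr

theorem mul_mem {i j : ℕ} (hi : 1 ≤ i) (hj : 1 ≤ j) {x y : A} (hx : x ∈ 𝒜 i) (hy : y ∈ 𝒜 j) :
    x * y ∈ 𝒜 (i + j) :=
  hgr.mul_le i j hi hj (mem_pmul hx hy)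

theorem succ_le_pmul_top {i : ℕ} (hi : 1 ≤ i) : 𝒜 (i + 1) ≤ pmul A ⊤ ⊤ :=
  hgr.succ i hi ▸ span_mono (Set.image2_subset le_top le_top)

theorem eq_zero_of_mem_of_mem {i j : ℕ} (hij : i ≠ j) {x : A} (hi : x ∈ 𝒜 i) (hj : x ∈ 𝒜 j) :
    x = 0 :=
  disjoint_def.1 (hgr.internal.submodule_iSupIndep.pairwiseDisjoint hij) x hi hj

end IsNaturalGrading

end

namespace IsAdaptedBasis

variable {n p : ℕ} {e f : ℕ → A} (hb : IsAdaptedBasis A n p e f)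
include hb

theorem finiteDimensional : FiniteDimensional ℂ A :=
  .of_basis (Module.Basis.mk hb.indep hb.span.ge)

theorem finrank_eq : Module.finrank ℂ A = n - p + p := by
  simp [Module.finrank_eq_card_basis (Module.Basis.mk hb.indep hb.span.ge)]

theorem e_ne_zero {m : ℕ} (h1 : 1 ≤ m) (h2 : m ≤ n - p) : e m ≠ 0 := by
  simpa [Nat.sub_add_cancel h1] using hb.indep.ne_zero (.inl ⟨m - 1, by omega⟩)

theorem linearIndependent_e_add_two (h : 2 ≤ n - p) :
    LinearIndependent ℂ (fun r : Fin (n - p - 2 + 1) => e (r + 2)) :=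
  hb.indep.comp (fun r : Fin (n - p - 2 + 1) => .inl ⟨r + 1, by omega⟩) fun r s hrs => by
    simpa [Fin.ext_iff] using hrs

theorem add_mul_e {x : A} (hx : x * e 1 = 0) {m : ℕ} (h1 : 1 ≤ m) (h2 : m ≤ n - p - 1) :
    (e 1 + x) * e m = e (m + 1) := by
  suffices x * e m = 0 by rw [add_mul, hb.mul_e m h1 h2, this, add_zero]
  rcases h1.eq_or_lt with rfl | h1
  · exact hx
  obtain ⟨m, rfl⟩ : ∃ m', m = m' + 1 := ⟨m - 1, by omega⟩
  rw [← hb.mul_e m (by omega) (by omega), ← mul_assoc, hx, zero_mul]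

theorem mem_span_e_last_of_e_one_mul_eq_zero (h : 2 ≤ n - p) {x : A}
    (hx : x ∈ Submodule.span ℂ (Set.range fun r : Fin (n - p - 2 + 1) => e (r + 2)))
    (hex : e 1 * x = 0) : x ∈ ℂ ∙ e (n - p) := by
  have := mem_span_last_of_shift_apply_eq_zero (hb.linearIndependent_e_add_two h)
    (LinearMap.mulLeft ℂ (e 1)) (fun r => hb.mul_e (r + 2) (by omega) (by omega))
    (by simpa [Nat.sub_add_cancel h] using hb.mul_last) hx hex
  simpa [Nat.sub_add_cancel h] using this

theorem range_mulLeft_eq_span (hpf : IsPFiliform A n p) (h : 2 ≤ n - p) {y : A}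
    (hy : y ∉ pmul A ⊤ ⊤) (hye : ∀ m, 1 ≤ m → m ≤ n - p - 1 → y * e m = e (m + 1)) :
    LinearMap.range (LinearMap.mulLeft ℂ y) =
      Submodule.span ℂ (Set.range fun r : Fin (n - p - 2 + 1) => e (r + 2)) := by
  have hpow : LinearMap.mulLeft ℂ y ^ (n - p - 1) ≠ 0 := fun h0 => by
    have := pow_mulLeft_apply_of_mul_eq (K := ℂ) hye (n - p - 1) le_rfl
    rw [h0, Nat.sub_add_cancel (by omega)] at this
    exact hb.e_ne_zero (by omega) le_rfl this.symm
  have hle : Submodule.span ℂ (Set.range fun r : Fin (n - p - 2 + 1) => e (r + 2)) ≤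
      LinearMap.range (LinearMap.mulLeft ℂ y) :=
    Submodule.span_le.2 <| Set.range_subset_iff.2 fun r => ⟨e (r + 1), hye _ (by omega) (by omega)⟩
  have := hb.finiteDimensional
  refine (eq_of_le_of_finrank_le hle ?_).symm
  rw [(hpf.2 y hy).2 hpow, finrank_span_eq_card (hb.linearIndependent_e_add_two h)]
  simp
  omega

end IsAdaptedBasis

namespace IsHomogAdaptedBasis

variable {n p : ℕ} {𝒜 : ℕ → Submodule ℂ A} {e f : ℕ → A}
  (hb : IsHomogAdaptedBasis A n p 𝒜 e f)
include hb

/-- Since `e m ∈ 𝒜 m`, the truncated subtraction in `s_m = dim 𝒜 m - 1` is exact for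
`1 ≤ m ≤ n - p`, and the `𝒜 m` are independent inside `A` of dimension `(n - p) + p`. -/
theorem sSum_le (hgr : IsNaturalGrading A 𝒜) : sSum A 𝒜 (n - p) ≤ p := by
  have := hb.adapted.finiteDimensional
  have hpos : ∀ m ∈ Finset.Icc 1 (n - p), 1 ≤ Module.finrank ℂ (𝒜 m) := fun m hm => by
    obtain ⟨h1, h2⟩ := Finset.mem_Icc.1 hm
    exact one_le_finrank_iff.2 <|
      (Submodule.ne_bot_iff _).2 ⟨e m, hb.e_mem m h1 h2, hb.adapted.e_ne_zero h1 h2⟩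
  have hsum : sSum A 𝒜 (n - p) + (n - p) = ∑ m ∈ Finset.Icc 1 (n - p), Module.finrank ℂ (𝒜 m) := by
    simp only [sSum, sdim, ← Finset.sum_congr rfl fun m hm => Nat.sub_add_cancel (hpos m hm),
      Finset.sum_add_distrib]
    simp
  have := hgr.internal.submodule_iSupIndep.sum_finrank_le (Finset.Icc 1 (n - p))
  rw [hb.adapted.finrank_eq] at this
  omega

theorem f_sSum_add_mem {k i : ℕ} (hk : k + 1 ≤ n - p) (hi1 : 1 ≤ i) (hi2 : i ≤ sdim A 𝒜 (k + 1)) :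
    f (sSum A 𝒜 k + i) ∈ 𝒜 (k + 1) :=
  hb.f_mem (k + 1) (by omega) hk _ (by rw [Nat.add_sub_cancel]; omega) (by rw [sSum_succ]; omega)

theorem e_one_mul_f_sSum_add (hgr : IsNaturalGrading A 𝒜) {k i : ℕ} (hk : k + 1 ≤ n - p)
    (hi1 : 1 ≤ i) (hi2 : i ≤ sdim A 𝒜 (k + 1)) : e 1 * f (sSum A 𝒜 k + i) = 0 := by
  have := sSum_mono 𝒜 hk
  rw [sSum_succ] at this
  exact hb.adapted.mul_f _ (by omega) (by have := hb.sSum_le hgr; omega)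

end IsHomogAdaptedBasis

end

theorem f_mul_f_eq_zero_general (n p : ℕ) (hnp : 4 ≤ n - p)
    (𝒜 : ℕ → Submodule ℂ A) (hgr : IsNaturalGrading A 𝒜)
    (hpf : IsPFiliform A n p)
    (e f : ℕ → A) (hbasis : IsHomogAdaptedBasis A n p 𝒜 e f)
    (hfe : ∀ k, 1 ≤ k → k ≤ n - p - 2 → ∀ j, 1 ≤ j → j ≤ n - p - k → ∀ i,
      (1 ≤ i → i ≤ sdim A 𝒜 (k + j + 1) →
        f (sSum A 𝒜 k + i) * e j = f (sSum A 𝒜 (k + j) + i)) ∧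
      (sdim A 𝒜 (k + j + 1) + 1 ≤ i → i ≤ sdim A 𝒜 (k + j) →
        f (sSum A 𝒜 k + i) * e j = 0)) :
    ∀ k t i j, 1 ≤ k → k ≤ n - p - 4 → 1 ≤ t → t ≤ n - p - 3 - k →
      sdim A 𝒜 (k + 2) + 1 ≤ i → i ≤ sdim A 𝒜 (k + 1) →
      sdim A 𝒜 (t + 2) + 1 ≤ j → j ≤ sdim A 𝒜 (t + 1) →
      f (sSum A 𝒜 k + i) * f (sSum A 𝒜 t + j) = 0 := by
  intro k t i j hk1 hk4 ht1 ht3 hi1 hi2 hj1 hj2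
  set F := f (sSum A 𝒜 k + i)
  set G := f (sSum A 𝒜 t + j)
  have hF : F ∈ 𝒜 (k + 1) := hbasis.f_sSum_add_mem (by omega) (by omega) hi2
  have hG : G ∈ 𝒜 (t + 1) := hbasis.f_sSum_add_mem (by omega) (by omega) hj2
  have hFe : F * e 1 = 0 := (hfe k hk1 (by omega) 1 le_rfl (by omega) i).2 hi1 hi2
  have hy : e 1 + F ∉ pmul A ⊤ ⊤ := by
    rw [Submodule.add_mem_iff_left _ (hgr.succ_le_pmul_top hk1 hF)]
    exact hbasis.adapted.char.1
  have hrange := hbasis.adapted.range_mulLeft_eq_span hpf (by omega) hy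
    fun m h1 h2 => hbasis.adapted.add_mul_e hFe h1 h2
  have hFG : F * G ∈ ℂ ∙ e (n - p) := by
    refine hbasis.adapted.mem_span_e_last_of_e_one_mul_eq_zero (by omega)
      (hrange ▸ ⟨G, ?_⟩) ?_
    · rw [LinearMap.mulLeft_apply, add_mul,
        hbasis.e_one_mul_f_sSum_add hgr (by omega) (by omega) hj2, zero_add]
    · rw [← mul_assoc, hbasis.e_one_mul_f_sSum_add hgr (by omega) (by omega) hi2, zero_mul]
  refine hgr.eq_zero_of_mem_of_mem (i := k + 1 + (t + 1)) (j := n - p) (by omega)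
    (hgr.mul_mem (by omega) (by omega) hF hG) ?_
  exact (span_singleton_le_iff_mem _ _).2 (hbasis.e_mem _ (by omega) le_rfl) hFG

/-- for an `n`-dimensional naturally graded `p`-filiform complex
associative algebra (`n − p ≥ 4`) with a homogeneous adapted basis as produced by
Lemma 3.3, the products `f_{s_1+⋯+s_k+i}·f_{s_1+⋯+s_t+j}` vanish for
`1 ≤ k ≤ n−p−4`, `1 ≤ t ≤ n−p−3−k`, `s_{k+2}+1 ≤ i ≤ s_{k+1}` and
`s_{t+2}+1 ≤ j ≤ s_{t+1}`. -/
theorem f_mul_f_eq_zero (n p : ℕ) (hp : 1 ≤ p) (hnp : 4 ≤ n - p)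
    [FiniteDimensional ℂ A] (hdim : Module.finrank ℂ A = n)
    (hnil : IsNilpotentAlg A)
    (𝒜 : ℕ → Submodule ℂ A) (hgr : IsNaturalGrading A 𝒜)
    (hpf : IsPFiliform A n p)
    (e f : ℕ → A) (hbasis : IsHomogAdaptedBasis A n p 𝒜 e f)
    (hfe : ∀ k, 1 ≤ k → k ≤ n - p - 2 → ∀ j, 1 ≤ j → j ≤ n - p - k → ∀ i,
      (1 ≤ i → i ≤ sdim A 𝒜 (k + j + 1) →
        f (sSum A 𝒜 k + i) * e j = f (sSum A 𝒜 (k + j) + i)) ∧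
      (sdim A 𝒜 (k + j + 1) + 1 ≤ i → i ≤ sdim A 𝒜 (k + j) →
        f (sSum A 𝒜 k + i) * e j = 0)) :
    ∀ k t i j, 1 ≤ k → k ≤ n - p - 4 → 1 ≤ t → t ≤ n - p - 3 - k →
      sdim A 𝒜 (k + 2) + 1 ≤ i → i ≤ sdim A 𝒜 (k + 1) →
      sdim A 𝒜 (t + 2) + 1 ≤ j → j ≤ sdim A 𝒜 (t + 1) →
      f (sSum A 𝒜 k + i) * f (sSum A 𝒜 t + j) = 0 :=
  f_mul_f_eq_zero_general n p hnp 𝒜 hgr hpf e f hbasis hfe
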